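/- Suppose the fibers F(t) = T_t(F(0)) of the Voronoi decomposition of S³ induced by γ₃ have boundary ∂F(0) = {q̄(θ) : θ ∈ [−π/3, π/3)} where q̄(θ) = q(θ, 3θ+π, ζ(θ)) in Hopf coordinates with ζ(θ) = arccot(3(3−4sin²θ)). Then for t ∈ [0, π], ∂F(0) ∩ ∂F(t) ≠ ∅ if and only if t ≤ 2π/3; consequently the modulus of discontinuity of the projection map ψ₃ : S³ → S¹ equals 2π/3. -/

import Mathlib

open Real Set

/-- Hopf coordinates on `S³ ⊂ ℝ⁴`:
`q(θ₁,θ₂,ζ) = (cos θ₁ cos ζ, sin θ₁ cos ζ, cos θ₂ sin ζ, sin θ₂ sin ζ)`. -/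
noncomputable def hopf (θ₁ θ₂ ζ : ℝ) : EuclideanSpace ℝ (Fin 4) :=
  WithLp.toLp 2 fun i => ![Real.cos θ₁ * Real.cos ζ, Real.sin θ₁ * Real.cos ζ,
             Real.cos θ₂ * Real.sin ζ, Real.sin θ₂ * Real.sin ζ] i

/-- `ζ(θ) = arccot(3(3 − 4 sin² θ))`, written via `arccot x = π/2 − arctan x`. -/
noncomputable def zetaOf (θ : ℝ) : ℝ :=
  π / 2 - Real.arctan (3 * (3 - 4 * Real.sin θ ^ 2))

/-- The boundary `∂F(0)` of the Voronoi fiber of `γ₃(0)`: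
`∂F(0) = {q̄(θ) = q(θ, 3θ+π, ζ(θ)) : θ ∈ [−π/3, π/3)}`. -/
noncomputable def bdryFiber3 : Set (EuclideanSpace ℝ (Fin 4)) :=
  {x | ∃ θ ∈ Set.Ico (-(π / 3)) (π / 3), x = hopf θ (3 * θ + π) (zetaOf θ)}

/-- The block rotation `T_t` of `ℝ⁴` with `2×2` rotation blocks of angles `t` and `3t`;
in Hopf coordinates it acts by `(θ₁, θ₂, ζ) ↦ (θ₁ + t, θ₂ + 3t, ζ)`. -/
noncomputable def rot4 (t : ℝ) (x : EuclideanSpace ℝ (Fin 4)) : EuclideanSpace ℝ (Fin 4) :=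
  WithLp.toLp 2 fun i =>
    ![Real.cos t * x 0 + Real.sin t * x 1,
      -Real.sin t * x 0 + Real.cos t * x 1,
      Real.cos (3 * t) * x 2 + Real.sin (3 * t) * x 3,
      -Real.sin (3 * t) * x 2 + Real.cos (3 * t) * x 3] i

/-! ### Auxiliary lemmas -/

lemma rot4_hopf (t a b z : ℝ) : rot4 t (hopf a b z) = hopf (a - t) (b - 3*t) z := by
  ext i
  fin_cases i <;>
  · simp [rot4, hopf, Real.cos_sub, Real.sin_sub]
    ring

lemma zetaOf_neg (θ : ℝ) : zetaOf (-θ) = zetaOf θ := by simp [zetaOf]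

lemma cos_zetaOf (θ : ℝ) :
    Real.cos (zetaOf θ) = Real.sin (Real.arctan (3 * (3 - 4 * Real.sin θ ^ 2))) := by
  rw [zetaOf, Real.cos_pi_div_two_sub]

lemma sin_zetaOf (θ : ℝ) :
    Real.sin (zetaOf θ) = Real.cos (Real.arctan (3 * (3 - 4 * Real.sin θ ^ 2))) := by
  rw [zetaOf, Real.sin_pi_div_two_sub]

lemma sin_zeta_pos (θ : ℝ) : 0 < Real.sin (zetaOf θ) := by
  rw [sin_zetaOf, Real.cos_arctan]
  positivity

lemma mem_half {θ : ℝ} (h : θ ∈ Ico (-(π/3)) (π/3)) : θ ∈ Icc (-(π/2)) (π/2) :=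
  ⟨by linarith [h.1, pi_pos.le], by linarith [h.2, pi_pos.le]⟩

lemma sin_sq_le {θ : ℝ} (h : θ ∈ Ico (-(π/3)) (π/3)) : Real.sin θ ^ 2 ≤ 3/4 := by
  have hm := mem_half h
  have hm3 : (π/3 : ℝ) ∈ Icc (-(π/2)) (π/2) := ⟨by linarith [pi_pos.le], by linarith [pi_pos.le]⟩
  have hm3' : (-(π/3) : ℝ) ∈ Icc (-(π/2)) (π/2) := ⟨by linarith [pi_pos.le], by linarith [pi_pos.le]⟩
  have l1 : Real.sin θ ≤ Real.sin (π/3) := Real.strictMonoOn_sin.monotoneOn hm hm3 h.2.le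
  have l2 : Real.sin (-(π/3)) ≤ Real.sin θ := Real.strictMonoOn_sin.monotoneOn hm3' hm h.1
  rw [Real.sin_pi_div_three] at l1
  rw [Real.sin_neg, Real.sin_pi_div_three] at l2
  have h3 : ((Real.sqrt 3)/2)^2 = 3/4 := by
    rw [div_pow, Real.sq_sqrt] <;> norm_num
  nlinarith [l1, l2, h3]

lemma cos_zeta_nonneg {θ : ℝ} (h : θ ∈ Ico (-(π/3)) (π/3)) : 0 ≤ Real.cos (zetaOf θ) := by
  rw [cos_zetaOf, Real.sin_arctan]
  have := sin_sq_le h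
  have : (0:ℝ) ≤ 3 * (3 - 4 * Real.sin θ ^ 2) := by linarith
  positivity

lemma endpoint {θ : ℝ} (h : θ ∈ Ico (-(π/3)) (π/3)) (hs : Real.sin θ ^ 2 = 3/4) :
    θ = -(π/3) := by
  have hm := mem_half h
  have hm3 : (π/3 : ℝ) ∈ Icc (-(π/2)) (π/2) := ⟨by linarith [pi_pos.le], by linarith [pi_pos.le]⟩
  have hm3' : (-(π/3) : ℝ) ∈ Icc (-(π/2)) (π/2) := ⟨by linarith [pi_pos.le], by linarith [pi_pos.le]⟩
  have l1 : Real.sin θ < Real.sin (π/3) := Real.strictMonoOn_sin hm hm3 h.2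
  have l2 : Real.sin (-(π/3)) ≤ Real.sin θ := Real.strictMonoOn_sin.monotoneOn hm3' hm h.1
  rw [Real.sin_pi_div_three] at l1
  have h3 : ((Real.sqrt 3)/2)^2 = 3/4 := by rw [div_pow, Real.sq_sqrt] <;> norm_num
  have hne : Real.sin θ = -((Real.sqrt 3)/2) := by
    rcases sq_eq_sq_iff_eq_or_eq_neg.mp (hs.trans h3.symm) with h' | h'
    · exact absurd h' (by intro hh; rw [hh] at l1; linarith)
    · exact h'
  have : Real.sin θ = Real.sin (-(π/3)) := by rw [hne, Real.sin_neg, Real.sin_pi_div_three]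
  exact Real.injOn_sin hm hm3' this

lemma sq_of_cos_zeta_eq {θ φ : ℝ} (h : Real.cos (zetaOf θ) = Real.cos (zetaOf φ)) :
    Real.sin θ ^ 2 = Real.sin φ ^ 2 := by
  rw [cos_zetaOf, cos_zetaOf] at h
  have h1 := Real.injOn_sin
    ⟨(Real.arctan_mem_Ioo _).1.le, (Real.arctan_mem_Ioo _).2.le⟩
    ⟨(Real.arctan_mem_Ioo _).1.le, (Real.arctan_mem_Ioo _).2.le⟩ h
  have h2 := Real.arctan_injective h1
  linarith

lemma ex_int {a b : ℝ} (h1 : Real.cos a = Real.cos b) (h2 : Real.sin a = Real.sin b) :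
    ∃ n : ℤ, (n:ℝ) * (2*π) = a - b := by
  have : Real.cos (a - b) = 1 := by
    rw [Real.cos_sub, h1, h2]
    nlinarith [Real.sin_sq_add_cos_sq b]
  exact (Real.cos_eq_one_iff _).mp this

lemma int_n_bound {n : ℤ} {x : ℝ} (h0 : 0 ≤ x) (h3 : x ≤ 3*π) (h : (n:ℝ)*(2*π) = x) :
    x ≤ 2*π := by
  have hp := pi_pos
  have h2 : (n:ℝ) < 2 := by nlinarith
  have h2' : n ≤ 1 := by
    have : n < 2 := by exact_mod_cast h2
    omega
  have : (n:ℝ) ≤ 1 := by exact_mod_cast h2'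
  nlinarith

lemma int_k_zero {k : ℤ} {x : ℝ} (hl : -(2*π) < x) (hr : x < 2*π) (h : (k:ℝ)*(2*π) = x) :
    x = 0 := by
  have hp := pi_pos
  have h1 : (k:ℝ) < 1 := by nlinarith
  have h2 : (-1:ℝ) < (k:ℝ) := by nlinarith
  have : k = 0 := by
    have a : k < 1 := by exact_mod_cast h1
    have b : -1 < k := by exact_mod_cast h2
    omega
  rw [this] at h
  simpa using h.symm

/-- The hard direction: if the intersection is nonempty then `t ≤ 2π/3`. -/
lemma backward {t θ φ : ℝ} (h0 : 0 ≤ t) (hπ : t ≤ π)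
    (hθ : θ ∈ Ico (-(π/3)) (π/3)) (hφ : φ ∈ Ico (-(π/3)) (π/3))
    (heq : hopf θ (3*θ+π) (zetaOf θ) = hopf (φ - t) (3*φ+π - 3*t) (zetaOf φ)) :
    t ≤ 2*π/3 := by
  have e0 : Real.cos θ * Real.cos (zetaOf θ) = Real.cos (φ - t) * Real.cos (zetaOf φ) := by
    simpa only [hopf, PiLp.toLp_apply, Matrix.cons_val_zero] using congrArg (fun v => v 0) heq
  have e1 : Real.sin θ * Real.cos (zetaOf θ) = Real.sin (φ - t) * Real.cos (zetaOf φ) := by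
    simpa only [hopf, PiLp.toLp_apply, Matrix.cons_val_one, Matrix.head_cons, Matrix.cons_val_zero] using congrArg (fun v => v 1) heq
  have e2 : Real.cos (3*θ+π) * Real.sin (zetaOf θ)
      = Real.cos (3*φ+π - 3*t) * Real.sin (zetaOf φ) := by
    simpa only [hopf, PiLp.toLp_apply, Matrix.cons_val_two, Matrix.tail_cons, Matrix.head_cons] using
      congrArg (fun v => v 2) heq
  have e3 : Real.sin (3*θ+π) * Real.sin (zetaOf θ)
      = Real.sin (3*φ+π - 3*t) * Real.sin (zetaOf φ) := by
    simpa only [hopf, PiLp.toLp_apply, Matrix.cons_val_three, Matrix.tail_cons, Matrix.head_cons] using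
      congrArg (fun v => v 3) heq
  have l : (Real.cos θ * Real.cos (zetaOf θ))^2 + (Real.sin θ * Real.cos (zetaOf θ))^2
      = (Real.cos (φ-t) * Real.cos (zetaOf φ))^2 + (Real.sin (φ-t) * Real.cos (zetaOf φ))^2 := by
    rw [e0, e1]
  have r1 := Real.sin_sq_add_cos_sq θ
  have r2 := Real.sin_sq_add_cos_sq (φ - t)
  have A : Real.cos (zetaOf θ)^2 = Real.cos (zetaOf φ)^2 := by
    linear_combination l - Real.cos (zetaOf θ)^2 * r1 + Real.cos (zetaOf φ)^2 * r2
  have hcθ := cos_zeta_nonneg hθ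
  have hcφ := cos_zeta_nonneg hφ
  have hcc : Real.cos (zetaOf θ) = Real.cos (zetaOf φ) := by nlinarith [A, hcθ, hcφ]
  have hsq : Real.sin θ ^ 2 = Real.sin φ ^ 2 := sq_of_cos_zeta_eq hcc
  have hζ : zetaOf θ = zetaOf φ := by rw [zetaOf, zetaOf, hsq]
  have hsp : Real.sin (zetaOf φ) ≠ 0 := (sin_zeta_pos φ).ne'
  rw [hζ] at e2 e3
  have e2' : Real.cos (3*θ+π) = Real.cos (3*φ+π - 3*t) := mul_right_cancel₀ hsp e2
  have e3' : Real.sin (3*θ+π) = Real.sin (3*φ+π - 3*t) := mul_right_cancel₀ hsp e3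
  obtain ⟨n, hn⟩ := ex_int e2' e3'
  rcases eq_or_lt_of_le hcθ with hz | hpos
  · -- boundary case: cos ζθ = 0, forcing θ = φ = -π/3
    have huθ : Real.sin θ ^ 2 = 3/4 := by
      have hcz := cos_zetaOf θ
      rw [← hz] at hcz
      have h0' : Real.sin (Real.arctan (3 * (3 - 4 * Real.sin θ ^ 2))) = 0 := hcz.symm
      rw [Real.sin_arctan] at h0'
      have hd : (3 * (3 - 4 * Real.sin θ ^ 2)) = 0 := by
        have hs := Real.sqrt_pos.mpr
          (show (0:ℝ) < 1 + (3 * (3 - 4 * Real.sin θ ^ 2))^2 by positivity)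
        rcases div_eq_zero_iff.mp h0' with h' | h'
        · exact h'
        · exact absurd h' hs.ne'
      linarith
    have hθe : θ = -(π/3) := endpoint hθ huθ
    have hφe : φ = -(π/3) := endpoint hφ (by rw [← hsq, huθ])
    rw [hθe, hφe] at hn
    have h3t : (n:ℝ) * (2*π) = 3*t := by linarith [hn]
    have := int_n_bound (by linarith) (by linarith) h3t
    linarith
  · -- interior case: cos ζθ > 0
    rw [hcc] at e0 e1
    have hcφ0 : Real.cos (zetaOf φ) ≠ 0 := by rw [← hcc]; exact hpos.ne'
    have f0 : Real.cos θ = Real.cos (φ - t) := mul_right_cancel₀ hcφ0 e0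
    have f1 : Real.sin θ = Real.sin (φ - t) := mul_right_cancel₀ hcφ0 e1
    obtain ⟨k, hk⟩ := ex_int f0 f1
    have hcase : θ = φ ∨ θ = -φ := by
      rcases sq_eq_sq_iff_eq_or_eq_neg.mp hsq with h' | h'
      · left; exact Real.injOn_sin (mem_half hθ) (mem_half hφ) h'
      · right
        have hss : Real.sin θ = Real.sin (-φ) := by rw [Real.sin_neg]; exact h'
        have hmφ : -φ ∈ Icc (-(π/2)) (π/2) := by
          have := mem_half hφ; constructor <;> [linarith [this.2]; linarith [this.1]]
        exact Real.injOn_sin (mem_half hθ) hmφ hss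
    rcases hcase with rfl | rfl
    · -- θ = φ : k·2π = t ⇒ t = 0
      have hkt : (k:ℝ) * (2*π) = t := by linarith [hk]
      have hp := pi_pos
      have := int_k_zero (by linarith) (by linarith) hkt
      linarith
    · -- θ = -φ : k·2π = t - 2φ ⇒ t = 2φ < 2π/3
      have hkt : (k:ℝ) * (2*π) = t - 2*φ := by linarith [hk]
      have hp := pi_pos
      have h1 := hφ.1
      have h2 := hφ.2
      have := int_k_zero (by linarith) (by linarith) hkt
      linarith

lemma zeta_end : zetaOf (-(π/3)) = π/2 := by
  have h3 : Real.sin (-(π/3)) ^ 2 = 3/4 := by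
    rw [Real.sin_neg, Real.sin_pi_div_three]
    rw [neg_pow, div_pow, Real.sq_sqrt] <;> norm_num
  rw [zetaOf, h3]
  norm_num

lemma forward_lt {t : ℝ} (h0 : 0 ≤ t) (ht : t < 2*π/3) :
    (bdryFiber3 ∩ rot4 t '' bdryFiber3).Nonempty := by
  have hp := pi_pos
  refine ⟨hopf (-(t/2)) (3 * (-(t/2)) + π) (zetaOf (-(t/2))),
    ⟨-(t/2), ⟨by linarith, by linarith⟩, rfl⟩, ?_⟩
  refine ⟨hopf (t/2) (3 * (t/2) + π) (zetaOf (t/2)),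
    ⟨t/2, ⟨by linarith, by linarith⟩, rfl⟩, ?_⟩
  rw [rot4_hopf]
  rw [show t/2 - t = -(t/2) by ring, show 3*(t/2) + π - 3*t = 3*(-(t/2)) + π by ring,
    show zetaOf (t/2) = zetaOf (-(t/2)) from (zetaOf_neg (t/2)).symm]

lemma forward_eq : (bdryFiber3 ∩ rot4 (2*π/3) '' bdryFiber3).Nonempty := by
  have hp := pi_pos
  refine ⟨hopf (-(π/3)) (3 * (-(π/3)) + π) (zetaOf (-(π/3))),
    ⟨-(π/3), ⟨le_refl _, by linarith⟩, rfl⟩, ?_⟩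
  refine ⟨hopf (-(π/3)) (3 * (-(π/3)) + π) (zetaOf (-(π/3))),
    ⟨-(π/3), ⟨le_refl _, by linarith⟩, rfl⟩, ?_⟩
  rw [rot4_hopf, zeta_end]
  rw [show -(π/3) - 2*π/3 = -π by ring, show 3 * (-(π/3)) + π - 3*(2*π/3) = -(2*π) by ring,
    show (3:ℝ) * (-(π/3)) + π = 0 by ring]
  ext i
  fin_cases i <;>
    simp [hopf, Real.cos_pi_div_two, Real.sin_pi_div_two, Real.cos_neg, Real.sin_neg,
      Real.cos_two_pi, Real.sin_two_pi]

/-- With `∂F(t) = T_t(∂F(0))`: for `t ∈ [0, π]`, `∂F(0) ∩ ∂F(t) ≠ ∅ ⟺ t ≤ 2π/3`;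
consequently the modulus of discontinuity of `ψ₃`, namely
`max{t ∈ [0,π] : ∂F(0) ∩ ∂F(t) ≠ ∅}`, equals `2π/3`. -/
theorem stmt19 :
    (∀ t ∈ Set.Icc (0 : ℝ) π,
      ((bdryFiber3 ∩ rot4 t '' bdryFiber3).Nonempty ↔ t ≤ 2 * π / 3)) ∧
    sSup {t : ℝ | t ∈ Set.Icc (0 : ℝ) π ∧
        (bdryFiber3 ∩ rot4 t '' bdryFiber3).Nonempty} = 2 * π / 3 := by
  have main : ∀ t ∈ Set.Icc (0 : ℝ) π,
      ((bdryFiber3 ∩ rot4 t '' bdryFiber3).Nonempty ↔ t ≤ 2 * π / 3) := by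
    rintro t ⟨h0, hπ⟩
    constructor
    · rintro ⟨x, hx, hx2⟩
      obtain ⟨θ, hθ, hxe⟩ := hx
      obtain ⟨y, ⟨φ, hφ, hye⟩, hyx⟩ := hx2
      subst hye
      rw [rot4_hopf] at hyx
      exact backward h0 hπ hθ hφ (hxe.symm.trans hyx.symm)
    · intro hle
      rcases eq_or_lt_of_le hle with heq | hlt
      · rw [heq]; exact forward_eq
      · exact forward_lt h0 hlt
  refine ⟨main, ?_⟩
  have hset : {t : ℝ | t ∈ Set.Icc (0 : ℝ) π ∧
      (bdryFiber3 ∩ rot4 t '' bdryFiber3).Nonempty} = Set.Icc (0:ℝ) (2*π/3) := by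
    ext t
    simp only [Set.mem_setOf_eq, Set.mem_Icc]
    constructor
    · rintro ⟨⟨h0, hπ⟩, hne⟩
      exact ⟨h0, (main t ⟨h0, hπ⟩).mp hne⟩
    · rintro ⟨h0, h2⟩
      have hπ : t ≤ π := by linarith [pi_pos]
      exact ⟨⟨h0, hπ⟩, (main t ⟨h0, hπ⟩).mpr h2⟩
  rw [hset]
  exact csSup_Icc (by positivity)
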